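/- arXiv:2004.10839 — 2 statements merged into one kernel-verified Lean document; each statement's English description precedes it below -/
import Mathlib

section
/- Let f, g, h ∈ ℤ[X] with g·h ≢ 0, let (a_n)_{n∈ℕ} = a(f,g,h), and let b, c be integers such that a_n = c·b^n for all sufficiently large n. If f(n) ≠ 0 for every n ∈ ℕ, then a_n = c·b^n for every n ∈ ℕ, i.e., the sequence is a geometric progression. -/
open Polynomial

/-- The sequence a(f,g,h): a₀ = g(0), aₙ = f(n)·aₙ₋₁ + g(n)·h(n)ⁿ for n ≥ 1. -/
def seqA (f g h : Polynomial ℤ) : ℕ → ℤ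
  | 0 => g.eval 0
  | n + 1 => f.eval ((n : ℤ) + 1) * seqA f g h n +
      g.eval ((n : ℤ) + 1) * (h.eval ((n : ℤ) + 1)) ^ (n + 1)

lemma ev_ne (p : Polynomial ℤ) (hp : p ≠ 0) : ∃ M : ℕ, ∀ m : ℕ, M ≤ m → p.eval (m:ℤ) ≠ 0 := by
  obtain ⟨x₀, hx₀⟩ := p.exists_max_root hp
  refine ⟨x₀.toNat + 1, fun m hm h0 => ?_⟩
  have := hx₀ _ h0
  omega

lemma ev_big (p : Polynomial ℤ) (hp : p.natDegree ≠ 0) (K : ℤ) :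
    ∃ M : ℕ, ∀ m : ℕ, M ≤ m → K < |p.eval (m:ℤ)| := by
  have hfin : (⋃ k ∈ (Finset.Icc (-K) K : Finset ℤ), { x : ℤ | (p - C k).IsRoot x }).Finite := by
    apply Set.Finite.biUnion (Finset.Icc (-K) K).finite_toSet
    intro k _
    apply finite_setOf_isRoot
    intro h
    have : p = C k := by linear_combination (norm := ring_nf) h
    rw [this, natDegree_C] at hp
    exact hp rfl
  obtain ⟨x₀, hx₀⟩ := hfin.bddAbove
  refine ⟨x₀.toNat + 1, fun m hm => ?_⟩
  by_contra hK
  push_neg at hK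
  have hmem : (m:ℤ) ∈ ⋃ k ∈ (Finset.Icc (-K) K : Finset ℤ), { x : ℤ | (p - C k).IsRoot x } := by
    simp only [Set.mem_iUnion]
    refine ⟨p.eval (m:ℤ), ?_, by simp [IsRoot]⟩
    simp only [Finset.mem_Icc]
    constructor
    · linarith [neg_abs_le (p.eval (m:ℤ))]
    · linarith [le_abs_self (p.eval (m:ℤ))]
  have := hx₀ hmem
  omega

lemma ev_bound (p : Polynomial ℤ) : ∃ B : ℤ, 0 < B ∧ ∀ m : ℕ, 1 ≤ m →
    |p.eval (m:ℤ)| ≤ B * (m:ℤ) ^ p.natDegree := by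
  refine ⟨∑ i ∈ Finset.range (p.natDegree + 1), |p.coeff i| + 1, by positivity, fun m hm => ?_⟩
  have h1 : (1:ℤ) ≤ (m:ℤ) := by exact_mod_cast hm
  rw [eval_eq_sum_range]
  calc |∑ i ∈ Finset.range (p.natDegree + 1), p.coeff i * (m:ℤ) ^ i|
      ≤ ∑ i ∈ Finset.range (p.natDegree + 1), |p.coeff i * (m:ℤ) ^ i| :=
        Finset.abs_sum_le_sum_abs _ _
    _ ≤ ∑ i ∈ Finset.range (p.natDegree + 1), |p.coeff i| * (m:ℤ) ^ p.natDegree := by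
        apply Finset.sum_le_sum
        intro i hi
        rw [abs_mul, abs_pow, abs_of_nonneg (by positivity : (0:ℤ) ≤ (m:ℤ))]
        exact mul_le_mul_of_nonneg_left
          (pow_le_pow_right₀ h1 (Finset.mem_range_succ_iff.mp hi)) (abs_nonneg _)
    _ ≤ _ := by
        rw [← Finset.sum_mul]
        have : (0:ℤ) < (m:ℤ) ^ p.natDegree := by positivity
        nlinarith

lemma ev_geom (p : Polynomial ℤ) (r : ℤ) (hr : 0 ≤ r) :
    ∃ M : ℕ, ∀ m : ℕ, M ≤ m → |p.eval (m:ℤ)| * r ^ m < (r + 1) ^ m := by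
  obtain ⟨B, hB, hBle⟩ := ev_bound p
  set d := p.natDegree with hd
  have hr0 : (0:ℝ) ≤ (r:ℝ) := by exact_mod_cast hr
  have hr1 : (0:ℝ) < (r:ℝ) + 1 := by positivity
  have hrr : (r:ℝ) / ((r:ℝ) + 1) < 1 := by rw [div_lt_one hr1]; linarith
  have hrr0 : (0:ℝ) ≤ (r:ℝ) / ((r:ℝ) + 1) := by positivity
  have htend := tendsto_pow_const_mul_const_pow_of_lt_one d hrr0 hrr
  have hB' : (0:ℝ) < 1 / (B:ℝ) := by positivity
  have hev : ∀ᶠ m : ℕ in Filter.atTop, (m:ℝ) ^ d * ((r:ℝ) / ((r:ℝ) + 1)) ^ m < 1 / (B:ℝ) :=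
    htend.eventually_lt_const hB'
  obtain ⟨M, hM⟩ := hev.exists_forall_of_atTop
  refine ⟨max M 1, fun m hm => ?_⟩
  have hm1 : 1 ≤ m := le_trans (le_max_right _ _) hm
  have hmM : M ≤ m := le_trans (le_max_left _ _) hm
  have h1 := hM m hmM
  have h2 := hBle m hm1
  rw [show (|p.eval (m:ℤ)| * r ^ m < (r + 1) ^ m) ↔
      ((|p.eval (m:ℤ)| * r ^ m : ℤ) : ℝ) < (((r + 1) ^ m : ℤ) : ℝ) from (Int.cast_lt).symm]
  push_cast [Int.cast_abs] at *
  have key : (B:ℝ) * (m:ℝ) ^ d * ((r:ℝ)/((r:ℝ)+1)) ^ m * ((r:ℝ)+1) ^ m < ((r:ℝ)+1) ^ m := by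
    have hpow : (0:ℝ) < ((r:ℝ)+1) ^ m := by positivity
    calc (B:ℝ) * (m:ℝ) ^ d * ((r:ℝ)/((r:ℝ)+1)) ^ m * ((r:ℝ)+1) ^ m
        = ((m:ℝ) ^ d * ((r:ℝ)/((r:ℝ)+1)) ^ m) * ((B:ℝ) * ((r:ℝ)+1) ^ m) := by ring
      _ < (1 / (B:ℝ)) * ((B:ℝ) * ((r:ℝ)+1) ^ m) := by
          apply mul_lt_mul_of_pos_right h1
          positivity
      _ = ((r:ℝ)+1) ^ m := by field_simp
  have hdiv : ((r:ℝ)/((r:ℝ)+1)) ^ m * ((r:ℝ)+1) ^ m = (r:ℝ) ^ m := by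
    rw [div_pow]
    field_simp
  have h2' : |((p.eval (m:ℤ) : ℤ) : ℝ)| ≤ (B:ℝ) * (m:ℝ) ^ d := by exact_mod_cast h2
  have hrm : (0:ℝ) ≤ (r:ℝ) ^ m := by positivity
  calc |((p.eval (m:ℤ) : ℤ) : ℝ)| * (r:ℝ) ^ m ≤ (B:ℝ) * (m:ℝ) ^ d * (r:ℝ) ^ m := by
        exact mul_le_mul_of_nonneg_right h2' hrm
    _ = (B:ℝ) * (m:ℝ) ^ d * ((r:ℝ)/((r:ℝ)+1)) ^ m * ((r:ℝ)+1) ^ m := by rw [← hdiv]; ring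
    _ < ((r:ℝ)+1) ^ m := key

lemma poly_eq_zero_of_large (P : Polynomial ℤ) (A s : ℕ) (hs : 0 < s)
    (hroot : ∀ k : ℕ, P.eval ((s * k + A : ℕ) : ℤ) = 0) : P = 0 := by
  apply P.eq_zero_of_infinite_isRoot
  apply Set.infinite_of_injective_forall_mem (f := fun k : ℕ => ((s * k + A : ℕ) : ℤ))
  · intro a b hab
    simp only [Int.natCast_inj] at hab
    exact Nat.eq_of_mul_eq_mul_left hs (by omega)
  · intro k
    exact hroot k
theorem stmt_6 (f g h : Polynomial ℤ) (hgh : g * h ≠ 0) (b c : ℤ)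
    (hev : ∃ N : ℕ, ∀ n : ℕ, N ≤ n → seqA f g h n = c * b ^ n)
    (hf : ∀ n : ℕ, f.eval (n : ℤ) ≠ 0) :
    ∀ n : ℕ, seqA f g h n = c * b ^ n := by
  obtain ⟨N, hN⟩ := hev
  have hg : g ≠ 0 := left_ne_zero_of_mul hgh
  have hh : h ≠ 0 := right_ne_zero_of_mul hgh
  obtain ⟨Mg, hMg⟩ := ev_ne g hg
  obtain ⟨Mh, hMh⟩ := ev_ne h hh
  set q : Polynomial ℤ := C b - f with hq
  have hqe : ∀ x : ℤ, q.eval x = b - f.eval x := by intro x; simp [hq]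
  -- The relation E, valid for n ≥ N
  have hE : ∀ n : ℕ, N ≤ n → g.eval ((n:ℤ)+1) * (h.eval ((n:ℤ)+1)) ^ (n+1)
      = c * b ^ n * q.eval ((n:ℤ)+1) := by
    intro n hn
    have h1 := hN n hn
    have h2 := hN (n+1) (le_trans hn (Nat.le_succ n))
    have h3 : seqA f g h (n+1) = f.eval ((n:ℤ)+1) * seqA f g h n +
        g.eval ((n:ℤ)+1) * (h.eval ((n:ℤ)+1)) ^ (n+1) := rfl
    rw [h1, h2] at h3
    rw [hqe]
    linear_combination -h3
  -- convenient cast fact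
  have hcast : ∀ n : ℕ, ((n:ℤ)+1) = (((n+1:ℕ)):ℤ) := by intro n; push_cast; ring
  -- b, c, q nonzero
  set n₀ : ℕ := N + Mg + Mh + 1 with hn₀
  have hE0 := hE n₀ (by omega)
  have hgne : g.eval ((n₀:ℤ)+1) ≠ 0 := by rw [hcast]; exact hMg _ (by omega)
  have hhne : h.eval ((n₀:ℤ)+1) ≠ 0 := by rw [hcast]; exact hMh _ (by omega)
  have hLne : g.eval ((n₀:ℤ)+1) * (h.eval ((n₀:ℤ)+1)) ^ (n₀+1) ≠ 0 :=
    mul_ne_zero hgne (pow_ne_zero _ hhne)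
  rw [hE0] at hLne
  have hc : c ≠ 0 := fun hc0 => hLne (by rw [hc0]; ring)
  have hb : b ≠ 0 := by
    intro hb0
    apply hLne
    rw [hb0, zero_pow (by omega : n₀ ≠ 0)]
    ring
  have hq0 : q ≠ 0 := by
    intro hq0
    apply hLne
    rw [hq0]
    simp
  obtain ⟨Mq, hMq⟩ := ev_ne q hq0
  have hb1 : 1 ≤ |b| := Int.one_le_abs hb
  -- h is constant
  have hdeg : h.natDegree = 0 := by
    by_contra hd
    obtain ⟨Mb, hMb⟩ := ev_big h hd |b|
    obtain ⟨Mc, hMc⟩ := ev_geom (C c * q) |b| (abs_nonneg b)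
    set n : ℕ := N + Mg + Mb + Mc + 1 with hn
    set m : ℕ := n + 1 with hm
    have hEn := hE n (by omega)
    have habs := congrArg abs hEn
    rw [abs_mul, abs_mul, abs_mul, abs_pow, abs_pow] at habs
    have hgn : g.eval ((n:ℤ)+1) ≠ 0 := by rw [hcast]; exact hMg _ (by omega)
    have hg1 : 1 ≤ |g.eval ((n:ℤ)+1)| := Int.one_le_abs hgn
    have hhb : |b| < |h.eval ((n:ℤ)+1)| := by rw [hcast]; exact hMb _ (by omega)
    have hgeo := hMc m (by omega)
    rw [show ((m:ℕ):ℤ) = ((n:ℤ)+1) by rw [hcast] , eval_mul, eval_C, abs_mul] at hgeo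
    -- LHS ≥ (|b|+1)^m
    have l1 : (|b|+1) ^ m ≤ |h.eval ((n:ℤ)+1)| ^ m :=
      pow_le_pow_left₀ (by positivity) (by omega) m
    have l2 : |h.eval ((n:ℤ)+1)| ^ m ≤ |g.eval ((n:ℤ)+1)| * |h.eval ((n:ℤ)+1)| ^ m :=
      le_mul_of_one_le_left (by positivity) hg1
    -- RHS < (|b|+1)^m
    have r1 : |b| ^ n ≤ |b| ^ m := pow_le_pow_right₀ hb1 (by omega)
    have r2 : |c| * |b| ^ n * |q.eval ((n:ℤ)+1)| ≤ |c| * |q.eval ((n:ℤ)+1)| * |b| ^ m := by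
      have hcq : 0 ≤ |c| * |q.eval ((n:ℤ)+1)| := by positivity
      calc |c| * |b| ^ n * |q.eval ((n:ℤ)+1)| = |c| * |q.eval ((n:ℤ)+1)| * |b| ^ n := by ring
        _ ≤ |c| * |q.eval ((n:ℤ)+1)| * |b| ^ m := by
            apply mul_le_mul_of_nonneg_left r1 hcq
    have : (|b|+1) ^ m < (|b|+1) ^ m := by
      calc (|b|+1) ^ m ≤ |g.eval ((n:ℤ)+1)| * |h.eval ((n:ℤ)+1)| ^ m := le_trans l1 l2
        _ = |c| * |b| ^ n * |q.eval ((n:ℤ)+1)| := habs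
        _ ≤ |c| * |q.eval ((n:ℤ)+1)| * |b| ^ m := r2
        _ < (|b|+1) ^ m := hgeo
    exact absurd this (lt_irrefl _)
  -- h is the constant polynomial t
  set t : ℤ := h.coeff 0 with htdef
  have ht : h = C t := h.eq_C_of_natDegree_eq_zero hdeg
  have hte : ∀ x : ℤ, h.eval x = t := by intro x; rw [ht]; simp
  have ht0 : t ≠ 0 := by intro h0; apply hh; rw [ht, h0, map_zero]
  have ht1 : 1 ≤ |t| := Int.one_le_abs ht0
  have hE' : ∀ n : ℕ, N ≤ n → g.eval ((n:ℤ)+1) * t ^ (n+1) = c * b ^ n * q.eval ((n:ℤ)+1) := by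
    intro n hn
    have := hE n hn
    rwa [hte] at this
  -- |t| = |b|
  have htb : |t| = |b| := by
    rcases lt_trichotomy |t| |b| with hlt | heq | hgt
    · exfalso
      obtain ⟨Mc, hMc⟩ := ev_geom ((g * C t).comp (X + 1)) |t| (abs_nonneg t)
      set n : ℕ := N + Mg + Mq + Mc + 1 with hn
      have hEn := hE' n (by omega)
      have habs := congrArg abs hEn
      simp only [abs_mul, abs_pow] at habs
      have hgn : g.eval ((n:ℤ)+1) ≠ 0 := by rw [hcast]; exact hMg _ (by omega)
      have hqn : q.eval ((n:ℤ)+1) ≠ 0 := by rw [hcast]; exact hMq _ (by omega)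
      have hgeo := hMc n (by omega)
      have hevc : ((g * C t).comp (X + 1)).eval (n:ℤ) = g.eval ((n:ℤ)+1) * t := by
        simp [eval_comp]
      rw [hevc, abs_mul] at hgeo
      have e2 : (|t|+1) ^ n ≤ |b| ^ n := pow_le_pow_left₀ (by positivity) (by omega) n
      have e3 : |b| ^ n ≤ |c| * |b| ^ n * |q.eval ((n:ℤ)+1)| := by
        have h1 : 1 ≤ |c| := Int.one_le_abs hc
        have h2 : 1 ≤ |q.eval ((n:ℤ)+1)| := Int.one_le_abs hqn
        have hbp : (0:ℤ) < |b| ^ n := by positivity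
        calc |b| ^ n ≤ |c| * |b| ^ n := le_mul_of_one_le_left (by positivity) h1
          _ ≤ |c| * |b| ^ n * |q.eval ((n:ℤ)+1)| := le_mul_of_one_le_right (by positivity) h2
      have : |c| * |b| ^ n * |q.eval ((n:ℤ)+1)| < |c| * |b| ^ n * |q.eval ((n:ℤ)+1)| := by
        calc |c| * |b| ^ n * |q.eval ((n:ℤ)+1)| = |g.eval ((n:ℤ)+1)| * |t| ^ (n+1) := habs.symm
          _ = |g.eval ((n:ℤ)+1)| * |t| * |t| ^ n := by ring
          _ < (|t|+1) ^ n := hgeo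
          _ ≤ |b| ^ n := e2
          _ ≤ |c| * |b| ^ n * |q.eval ((n:ℤ)+1)| := e3
      exact absurd this (lt_irrefl _)
    · exact heq
    · exfalso
      obtain ⟨Mc, hMc⟩ := ev_geom (C c * q) |b| (abs_nonneg b)
      set n : ℕ := N + Mg + Mq + Mc + 1 with hn
      have hEn := hE' n (by omega)
      have habs := congrArg abs hEn
      simp only [abs_mul, abs_pow] at habs
      have hgn : g.eval ((n:ℤ)+1) ≠ 0 := by rw [hcast]; exact hMg _ (by omega)
      have hg1 : 1 ≤ |g.eval ((n:ℤ)+1)| := Int.one_le_abs hgn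
      have hgeo := hMc (n+1) (by omega)
      rw [show (((n+1:ℕ)):ℤ) = ((n:ℤ)+1) from (hcast n).symm, eval_mul, eval_C, abs_mul] at hgeo
      have l1 : (|b|+1) ^ (n+1) ≤ |t| ^ (n+1) :=
        pow_le_pow_left₀ (by positivity) (by omega) (n+1)
      have l2 : |t| ^ (n+1) ≤ |g.eval ((n:ℤ)+1)| * |t| ^ (n+1) :=
        le_mul_of_one_le_left (by positivity) hg1
      have r1 : |b| ^ n ≤ |b| ^ (n+1) := pow_le_pow_right₀ hb1 (by omega)
      have r2 : |c| * |b| ^ n * |q.eval ((n:ℤ)+1)| ≤ |c| * |q.eval ((n:ℤ)+1)| * |b| ^ (n+1) := by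
        have hcq : 0 ≤ |c| * |q.eval ((n:ℤ)+1)| := by positivity
        calc |c| * |b| ^ n * |q.eval ((n:ℤ)+1)| = |c| * |q.eval ((n:ℤ)+1)| * |b| ^ n := by ring
          _ ≤ |c| * |q.eval ((n:ℤ)+1)| * |b| ^ (n+1) := by
              apply mul_le_mul_of_nonneg_left r1 hcq
      have : (|b|+1) ^ (n+1) < (|b|+1) ^ (n+1) := by
        calc (|b|+1) ^ (n+1) ≤ |g.eval ((n:ℤ)+1)| * |t| ^ (n+1) := le_trans l1 l2
          _ = |c| * |b| ^ n * |q.eval ((n:ℤ)+1)| := habs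
          _ ≤ |c| * |q.eval ((n:ℤ)+1)| * |b| ^ (n+1) := r2
          _ < (|b|+1) ^ (n+1) := hgeo
      exact absurd this (lt_irrefl _)
  -- t = b
  have htbb : t = b := by
    rcases abs_eq_abs.mp htb with h' | h'
    · exact h'
    · exfalso
      -- t = -b : get polynomial identity from odd n, contradiction at even n
      have hPz : (C b * g.comp (X + 1) - C c * q.comp (X + 1)) = 0 := by
        apply poly_eq_zero_of_large _ (2*N+1) 2 two_pos
        intro k
        set n : ℕ := 2 * k + (2*N+1) with hndef
        have hEn := hE' n (by omega)
        rw [h'] at hEn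
        have hodd : Odd n := ⟨k + N, by omega⟩
        have hneg : (-b) ^ (n+1) = b ^ (n+1) := Even.neg_pow (Odd.add_one hodd) b
        rw [hneg] at hEn
        have hcancel : b ^ n * (b * g.eval ((n:ℤ)+1)) = b ^ n * (c * q.eval ((n:ℤ)+1)) := by
          linear_combination hEn
        have h2 := mul_left_cancel₀ (pow_ne_zero n hb) hcancel
        simp only [eval_sub, eval_mul, eval_C, eval_comp, eval_add, eval_X, eval_one]
        linear_combination h2
      set n : ℕ := 2 * (N + Mg + 1) with hndef
      have hEn := hE' n (by omega)
      rw [h'] at hEn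
      have hodd : Odd (n+1) := ⟨N + Mg + 1, by omega⟩
      have hneg : (-b) ^ (n+1) = -(b ^ (n+1)) := Odd.neg_pow hodd b
      rw [hneg] at hEn
      have h0 := congrArg (Polynomial.eval ((n:ℕ):ℤ)) hPz
      simp only [eval_sub, eval_mul, eval_C, eval_comp, eval_add, eval_X, eval_one,
        eval_zero] at h0
      have hcancel : b ^ n * (b * g.eval ((n:ℤ)+1)) = b ^ n * (-(c * q.eval ((n:ℤ)+1))) := by
        linear_combination -hEn
      have h2 := mul_left_cancel₀ (pow_ne_zero n hb) hcancel
      have hgn : g.eval ((n:ℤ)+1) ≠ 0 := by rw [hcast]; exact hMg _ (by omega)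
      have : 2 * (b * g.eval ((n:ℤ)+1)) = 0 := by linear_combination h2 + h0
      rcases mul_eq_zero.mp this with h3 | h3
      · norm_num at h3
      · exact absurd (mul_eq_zero.mp h3) (by simp [hb, hgn])
  -- the global identity  b·g(x+1) = c·q(x+1)
  have hPz : (C b * g.comp (X + 1) - C c * q.comp (X + 1)) = 0 := by
    apply poly_eq_zero_of_large _ N 1 one_pos
    intro k
    set n : ℕ := 1 * k + N with hndef
    have hEn := hE' n (by omega)
    rw [htbb] at hEn
    have hcancel : b ^ n * (b * g.eval ((n:ℤ)+1)) = b ^ n * (c * q.eval ((n:ℤ)+1)) := by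
      linear_combination hEn
    have h2 := mul_left_cancel₀ (pow_ne_zero n hb) hcancel
    simp only [eval_sub, eval_mul, eval_C, eval_comp, eval_add, eval_X, eval_one]
    linear_combination h2
  have key : ∀ n : ℕ, b * g.eval ((n:ℤ)+1) = c * q.eval ((n:ℤ)+1) := by
    intro n
    have h0 := congrArg (Polynomial.eval ((n:ℕ):ℤ)) hPz
    simp only [eval_sub, eval_mul, eval_C, eval_comp, eval_add, eval_X, eval_one,
      eval_zero] at h0
    linarith
  -- downward induction
  have main : ∀ j : ℕ, seqA f g h (N - j) = c * b ^ (N - j) := by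
    intro j
    induction j with
    | zero => simpa using hN N le_rfl
    | succ j ih =>
      rcases le_or_gt N j with hj | hj
      · rw [show N - (j+1) = N - j from by omega]
        exact ih
      · have hnj : N - j = (N - (j+1)) + 1 := by omega
        set n := N - (j+1) with hndef
        rw [hnj] at ih
        have hrec : seqA f g h (n+1) = f.eval ((n:ℤ)+1) * seqA f g h n +
            g.eval ((n:ℤ)+1) * (h.eval ((n:ℤ)+1)) ^ (n+1) := rfl
        have hk := key n
        rw [hqe] at hk
        have hf' : f.eval ((n:ℤ)+1) ≠ 0 := by rw [hcast]; exact hf (n+1)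
        apply mul_left_cancel₀ hf'
        rw [ih] at hrec
        rw [hte] at hrec
        rw [htbb] at hrec
        linear_combination -hrec - (b:ℤ)^n * hk
  intro n
  rcases le_or_gt N n with hn | hn
  · exact hN n hn
  · rw [show n = N - (N - n) from by omega]
    exact main (N - n)
end

section
/- Let n₀ ∈ ℕ, let b', c', d be integers, let P = ∏_{j=0}^{n₀−1}(X − j) ∈ ℤ[X], and define f = b'·n₀! − b'·P, g = c'·(d − 1)·n₀! + c'·P, and h the constant polynomial b'·d·n₀!. Set (a_n)_{n∈ℕ} = a(f,g,h). Then a_n = (d^{n+1} − 1)·c'·(b')^n·(n₀!)^{n+1} for every n < n₀, and a_n = c'·(b')^n·d^{n+1}·(n₀!)^{n+1} for every n ≥ n₀; in particular, writing b = b'·d·n₀! and c = c'·d·n₀!, one has a_n = c·b^n for every n ≥ n₀. -/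
open Polynomial

lemma prod_range_sub_eq_factorial (n : ℕ) :
    ∏ j ∈ Finset.range n, ((n : ℤ) - (j : ℤ)) = (n.factorial : ℤ) := by
  rw [← Finset.prod_range_reflect]
  have : ∀ j ∈ Finset.range n, (n : ℤ) - ((n - 1 - j : ℕ) : ℤ) = ((j + 1 : ℕ) : ℤ) := by
    intro j hj
    rw [Finset.mem_range] at hj
    push_cast [Nat.sub_sub]
    have : (1 + j : ℕ) ≤ n := by omega
    push_cast [Nat.cast_sub this]
    ring
  rw [Finset.prod_congr rfl this]
  rw [← Nat.cast_prod]
  norm_cast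
  rw [Finset.prod_range_add_one_eq_factorial]

theorem stmt_15 (n₀ : ℕ) (b' c' d : ℤ)
    (P : Polynomial ℤ) (hP : P = ∏ j ∈ Finset.range n₀, (Polynomial.X - Polynomial.C (j : ℤ)))
    (f g h : Polynomial ℤ)
    (hf : f = Polynomial.C (b' * (n₀.factorial : ℤ)) - Polynomial.C b' * P)
    (hg : g = Polynomial.C (c' * (d - 1) * (n₀.factorial : ℤ)) + Polynomial.C c' * P)
    (hh : h = Polynomial.C (b' * d * (n₀.factorial : ℤ))) :
    (∀ n : ℕ, n < n₀ →
      seqA f g h n = (d ^ (n + 1) - 1) * c' * b' ^ n * (n₀.factorial : ℤ) ^ (n + 1)) ∧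
    (∀ n : ℕ, n₀ ≤ n →
      seqA f g h n = c' * b' ^ n * d ^ (n + 1) * (n₀.factorial : ℤ) ^ (n + 1)) ∧
    (∀ n : ℕ, n₀ ≤ n →
      seqA f g h n = (c' * d * (n₀.factorial : ℤ)) * (b' * d * (n₀.factorial : ℤ)) ^ n) := by
  set F : ℤ := (n₀.factorial : ℤ) with hF
  -- Evaluation of P at naturals below n₀ is 0
  have hP0 : ∀ n : ℕ, n < n₀ → P.eval (n : ℤ) = 0 := by
    intro n hn
    rw [hP, Polynomial.eval_prod]
    apply Finset.prod_eq_zero (Finset.mem_range.mpr hn)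
    simp
  have hPn₀ : P.eval (n₀ : ℤ) = F := by
    rw [hP, Polynomial.eval_prod]
    simpa using prod_range_sub_eq_factorial n₀
  have hfe : ∀ x : ℤ, f.eval x = b' * F - b' * P.eval x := by
    intro x; rw [hf]; simp
  have hge : ∀ x : ℤ, g.eval x = c' * (d - 1) * F + c' * P.eval x := by
    intro x; rw [hg]; simp
  have hhe : ∀ x : ℤ, h.eval x = b' * d * F := by
    intro x; rw [hh]; simp
  -- Part 1: n < n₀
  have part1 : ∀ n : ℕ, n < n₀ →
      seqA f g h n = (d ^ (n + 1) - 1) * c' * b' ^ n * F ^ (n + 1) := by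
    intro n
    induction n with
    | zero =>
      intro hn
      show g.eval 0 = _
      rw [hge]
      have h0 : P.eval 0 = 0 := by simpa using hP0 0 hn
      rw [h0]
      ring
    | succ m ih =>
      intro hn
      have hm : m < n₀ := by omega
      show f.eval ((m : ℤ) + 1) * seqA f g h m +
          g.eval ((m : ℤ) + 1) * (h.eval ((m : ℤ) + 1)) ^ (m + 1) = _
      have hcast : ((m : ℤ) + 1) = ((m + 1 : ℕ) : ℤ) := by push_cast; ring
      rw [hfe, hge, hhe, ih hm, hcast, hP0 (m + 1) hn]
      ring
  -- base case at n₀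
  have base : seqA f g h n₀ = c' * b' ^ n₀ * d ^ (n₀ + 1) * F ^ (n₀ + 1) := by
    cases n₀ with
    | zero =>
      show g.eval 0 = _
      rw [hge]
      have : P.eval 0 = F := by simpa using hPn₀
      rw [this]
      ring
    | succ m =>
      show f.eval ((m : ℤ) + 1) * seqA f g h m +
          g.eval ((m : ℤ) + 1) * (h.eval ((m : ℤ) + 1)) ^ (m + 1) = _
      have hcast : ((m : ℤ) + 1) = ((m + 1 : ℕ) : ℤ) := by push_cast; ring
      rw [hfe, hge, hhe, hcast, hPn₀]
      ring
  have part2 : ∀ n : ℕ, n₀ ≤ n →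
      seqA f g h n = c' * b' ^ n * d ^ (n + 1) * F ^ (n + 1) := by
    intro n
    induction n with
    | zero =>
      intro hn
      have : n₀ = 0 := Nat.le_zero.mp hn
      subst this
      exact base
    | succ m ih =>
      intro hn
      rcases Nat.lt_or_ge n₀ (m + 1) with hlt | hge'
      · have hm : n₀ ≤ m := by omega
        show f.eval ((m : ℤ) + 1) * seqA f g h m +
            g.eval ((m : ℤ) + 1) * (h.eval ((m : ℤ) + 1)) ^ (m + 1) = _
        rw [hfe, hge, hhe, ih hm]
        ring
      · have : n₀ = m + 1 := by omega
        subst this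
        exact base
  refine ⟨part1, part2, fun n hn => ?_⟩
  rw [part2 n hn]
  have : F ^ (n + 1) = F * F ^ n := pow_succ' F n
  rw [this]
  ring
end
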